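/- arXiv:math/0208182 — 3 statements merged into one kernel-verified Lean document; each statement's English description precedes it below -/
import Mathlib

section
/- If (𝓑_n)_{n∈ℕ} is a family of finite families of nonempty basic sets in a product X = ∏_{i∈I} X i of nonempty topological spaces such that the sets I(𝓑_n) = ⋃_{B∈𝓑_n} I(B) are pairwise disjoint, then ⋃_n ⋃(𝓑_n) is dense in X. -/
/-- A *basic set* in a product `∀ i, X i`: a finite intersection of
coordinate preimages. -/
def IsBasicSet {I : Type*} {X : I → Type*} (B : Set (∀ i, X i)) : Prop :=
  ∃ (F : Finset I) (S : ∀ i, Set (X i)),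
    B = ⋂ i ∈ F, (fun x => x i) ⁻¹' (S i)

/-- The projection of a subset of the product onto the `i`-th coordinate. -/
def bproj {I : Type*} {X : I → Type*} (i : I) (B : Set (∀ i, X i)) : Set (X i) :=
  (fun x => x i) '' B

/-- The support `I(B)` of a subset of the product: the set of coordinates where
it is properly constrained. -/
def bsupp {I : Type*} {X : I → Type*} (B : Set (∀ i, X i)) : Set I :=
  {i | bproj i B ≠ Set.univ}

/-!
A nonempty open set `U` contains a box around one of its points, constrained only on a finite
set `F` of coordinates. Each coordinate lies in at most one of the supports `I(𝓑_n)`, so some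
`I(𝓑_n)` misses `F`. A basic set is the product of its projections, and those projections are
all of `X i` for `i ∈ F`, so any `B ∈ 𝓑_n` contains a point that agrees with the box on `F`.
-/

namespace IsBasicSet

variable {I : Type*} {X : I → Type*} {B : Set (∀ i, X i)}

theorem mem_of_forall_mem_bproj (hB : IsBasicSet B) {y : ∀ i, X i}
    (hy : ∀ i, y i ∈ bproj i B) : y ∈ B := by
  obtain ⟨F, S, rfl⟩ := hB
  refine Set.mem_iInter₂.mpr fun i hi => ?_
  obtain ⟨z, hz, hzy⟩ := hy i
  rw [Set.mem_preimage, ← hzy]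
  exact Set.mem_iInter₂.mp hz i hi

theorem piecewise_mem (hB : IsBasicSet B) {F : Finset I} [∀ j, Decidable (j ∈ F)]
    (hF : Disjoint (F : Set I) (bsupp B)) (x : ∀ i, X i) {b : ∀ i, X i} (hb : b ∈ B) :
    F.piecewise x b ∈ B := by
  refine hB.mem_of_forall_mem_bproj fun i => ?_
  by_cases hi : i ∈ F
  · have hproj : bproj i B = Set.univ := not_not.mp (Set.disjoint_left.mp hF hi)
    simp [hproj]
  · rw [F.piecewise_eq_of_notMem _ _ hi]
    exact Set.mem_image_of_mem _ hb

end IsBasicSet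

theorem Pairwise.finite_setOf_not_disjoint {ι α : Type*} {T : ι → Set α}
    (hT : Pairwise fun m n => Disjoint (T m) (T n)) {F : Set α} (hF : F.Finite) :
    {n | ¬Disjoint (T n) F}.Finite := by
  have hsub : {n | ¬Disjoint (T n) F} ⊆ ⋃ i ∈ F, {n | i ∈ T n} := by
    intro n hn
    obtain ⟨i, hiT, hiF⟩ := Set.not_disjoint_iff.mp hn
    exact Set.mem_biUnion hiF hiT
  refine (hF.biUnion fun i _ => ?_).subset hsub
  refine Set.Subsingleton.finite fun m hm n hn => ?_
  by_contra hmn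
  exact Set.disjoint_left.mp (hT hmn) hm hn

theorem stmt_6_general {I : Type*} {X : I → Type*} [∀ i, TopologicalSpace (X i)]
    (𝓑 : ℕ → Set (Set (∀ i, X i)))
    (hne : ∀ n, (𝓑 n).Nonempty)
    (hb : ∀ n, ∀ B ∈ 𝓑 n, IsBasicSet B ∧ B.Nonempty)
    (hdisj : Pairwise fun m n =>
      Disjoint (⋃ B ∈ 𝓑 m, bsupp B) (⋃ B ∈ 𝓑 n, bsupp B)) :
    Dense (⋃ n, ⋃₀ 𝓑 n) := by
  classical
  refine dense_iff_inter_open.mpr fun U hU ⟨x, hx⟩ => ?_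
  obtain ⟨F, u, hu, hFU⟩ := isOpen_pi_iff.mp hU x hx
  obtain ⟨n, hn⟩ :=
    (hdisj.finite_setOf_not_disjoint F.finite_toSet).infinite_compl.nonempty
  obtain ⟨B, hB⟩ := hne n
  obtain ⟨hBbasic, b, hbB⟩ := hb n B hB
  have hFB : Disjoint (F : Set I) (bsupp B) :=
    (not_not.mp hn).symm.mono_right (Set.subset_biUnion_of_mem hB)
  refine ⟨F.piecewise x b, hFU fun i hi => ?_, ?_⟩
  · simpa [F.piecewise_eq_of_mem _ _ hi] using (hu i hi).2
  · exact Set.mem_iUnion.mpr ⟨n, B, hB, hBbasic.piecewise_mem hFB x hbB⟩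

theorem stmt_6 {I : Type*} {X : I → Type*} [∀ i, TopologicalSpace (X i)]
    [∀ i, Nonempty (X i)]
    (𝓑 : ℕ → Set (Set (∀ i, X i)))
    (hfin : ∀ n, (𝓑 n).Finite) (hne : ∀ n, (𝓑 n).Nonempty)
    (hb : ∀ n, ∀ B ∈ 𝓑 n, IsBasicSet B ∧ B.Nonempty)
    (hdisj : Pairwise fun m n =>
      Disjoint (⋃ B ∈ 𝓑 m, bsupp B) (⋃ B ∈ 𝓑 n, bsupp B)) :
    Dense (⋃ n, ⋃₀ 𝓑 n) :=
  stmt_6_general 𝓑 hne hb hdisj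
end

section
/- Let G be open and R regular open in a product X = ∏_{i∈I} X i of nonempty topological spaces. Suppose there is a sequence (𝓑_n) of finite families of nonempty basic subsets of R such that the sets I(𝓑_n) \ E are pairwise disjoint for some E ⊆ I with π_E(⋃ 𝓑_n) ⊇ π_E(G) for all n. Then G ⊆ R. -/
/-- Restriction of a point of the product to the coordinates in `E`. -/
def restr {I : Type*} {X : I → Type*} (E : Set I) (x : ∀ i, X i) : ∀ i : E, X i.1 :=
  fun i => x i.1

open Set Function

lemma exists_disjoint_of_pairwise_disjoint {ι α : Type*} [Infinite ι] {s : ι → Set α}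
    (hs : Pairwise (Disjoint on s)) {F : Set α} (hF : F.Finite) : ∃ n, Disjoint (s n) F := by
  by_contra! h
  choose g hg using fun n => not_disjoint_iff.mp (h n)
  have hg_inj : Injective g := fun m n hmn => by
    by_contra hne
    exact disjoint_left.mp (hs hne) (hg m).1 (hmn ▸ (hg n).1)
  exact hF.not_infinite (infinite_of_injective_forall_mem hg_inj fun n => (hg n).2)

section

variable {I : Type*} {X : I → Type*}

lemma IsBasicSet.mem_of_agree_on_bsupp {B : Set (∀ i, X i)} (hB : IsBasicSet B)
    {y z : ∀ i, X i} (hy : y ∈ B) (h : ∀ i ∈ bsupp B, z i = y i) : z ∈ B := by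
  obtain ⟨F, S, rfl⟩ := hB
  refine mem_iInter₂.mpr fun j hj => ?_
  by_cases hjB : j ∈ bsupp (⋂ i ∈ F, (fun x => x i) ⁻¹' S i)
  · simpa [h j hjB] using mem_iInter₂.mp hy j hj
  · obtain ⟨b, hb, hbz⟩ : z j ∈ bproj j (⋂ i ∈ F, (fun x => x i) ⁻¹' S i) := by
      rw [bsupp, mem_ofPred_eq, not_not] at hjB
      exact hjB ▸ mem_univ _
    simpa [← hbz] using mem_iInter₂.mp hb j hj

lemma mem_closure_of_forall_finset_exists_isBasicSet [∀ i, TopologicalSpace (X i)]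
    {R : Set (∀ i, X i)} {x : ∀ i, X i}
    (h : ∀ F : Finset I, ∃ B ⊆ R, IsBasicSet B ∧ ∃ y ∈ B, ∀ i ∈ bsupp B ∩ ↑F, y i = x i) :
    x ∈ closure R := by
  classical
  refine mem_closure_iff.mpr fun o ho hxo => ?_
  obtain ⟨F, u, hu, hFu⟩ := isOpen_pi_iff.mp ho x hxo
  obtain ⟨B, hBR, hB, y, hyB, hyx⟩ := h F
  refine ⟨F.piecewise x y, hFu fun i hi => ?_, hBR (hB.mem_of_agree_on_bsupp hyB fun i hi => ?_)⟩
  · rw [Finset.piecewise_eq_of_mem _ _ _ hi]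
    exact (hu i hi).2
  · by_cases hiF : i ∈ F
    · rw [Finset.piecewise_eq_of_mem _ _ _ hiF, hyx i ⟨hi, hiF⟩]
    · rw [Finset.piecewise_eq_of_notMem _ _ _ hiF]

end

theorem stmt_7_general {I : Type*} {X : I → Type*} [∀ i, TopologicalSpace (X i)]
    (G R : Set (∀ i, X i)) (hG : IsOpen G) (hR : R = interior (closure R))
    (E : Set I) (𝓑 : ℕ → Set (Set (∀ i, X i)))
    (hb : ∀ n, ∀ B ∈ 𝓑 n, IsBasicSet B ∧ B.Nonempty ∧ B ⊆ R)
    (hproj : ∀ n, restr E '' G ⊆ restr E '' ⋃₀ 𝓑 n)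
    (hdisj : Pairwise fun m n =>
      Disjoint ((⋃ B ∈ 𝓑 m, bsupp B) \ E) ((⋃ B ∈ 𝓑 n, bsupp B) \ E)) :
    G ⊆ R := by
  have hG_closure : G ⊆ closure R := fun x hx =>
    mem_closure_of_forall_finset_exists_isBasicSet fun F => by
      obtain ⟨n, hnF⟩ := exists_disjoint_of_pairwise_disjoint hdisj F.finite_toSet
      obtain ⟨y, ⟨B, hB𝓑, hyB⟩, hyx⟩ := hproj n (mem_image_of_mem _ hx)
      obtain ⟨hB, -, hBR⟩ := hb n B hB𝓑
      refine ⟨B, hBR, hB, y, hyB, fun i ⟨hiB, hiF⟩ => ?_⟩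
      have hiE : i ∈ E := by
        by_contra hiE
        exact disjoint_left.mp hnF ⟨mem_biUnion hB𝓑 hiB, hiE⟩ hiF
      exact congrFun hyx ⟨i, hiE⟩
  exact hR ▸ interior_maximal hG_closure hG

theorem stmt_7 {I : Type*} {X : I → Type*} [∀ i, TopologicalSpace (X i)]
    [∀ i, Nonempty (X i)]
    (G R : Set (∀ i, X i)) (hG : IsOpen G) (hR : R = interior (closure R))
    (E : Set I) (𝓑 : ℕ → Set (Set (∀ i, X i)))
    (hfin : ∀ n, (𝓑 n).Finite) (hne : ∀ n, (𝓑 n).Nonempty)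
    (hb : ∀ n, ∀ B ∈ 𝓑 n, IsBasicSet B ∧ B.Nonempty ∧ B ⊆ R)
    (hproj : ∀ n, restr E '' G ⊆ restr E '' ⋃₀ 𝓑 n)
    (hdisj : Pairwise fun m n =>
      Disjoint ((⋃ B ∈ 𝓑 m, bsupp B) \ E) ((⋃ B ∈ 𝓑 n, bsupp B) \ E)) :
    G ⊆ R :=
  stmt_7_general G R hG hR E 𝓑 hb hproj hdisj
end

section
/- Let X be a topological space, 𝒱 a cover and 𝒱₁ a cover star-refining 𝒱 (each V ∈ 𝒱₁ has St(V,𝒱₁) ⊆ some member of 𝒱), and 𝓡 an open refinement of 𝒱₁. Then for any finitely many R₁,…,R_n ∈ 𝓡, the set interior (closure (R₁ ∪ ⋯ ∪ R_n)) is contained in a finite union of members of 𝒱. -/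
/-! Every point `x` of the closure of `A` lies in an open `U ∈ 𝒱₁` which must meet `A`, so
`x ∈ St(A, 𝒱₁)`. Stars commute with unions, and enlarging each `Rₖ` to a member `Wₖ ∈ 𝒱₁`
puts `St(Rₖ, 𝒱₁)` inside `St(Wₖ, 𝒱₁)`, which lies in a member of `𝒱`. -/

/-- The star of a set `A` with respect to a family `𝒰` of sets:
the union of all members of `𝒰` meeting `A`. -/
def star' {X : Type*} (A : Set X) (𝒰 : Set (Set X)) : Set X :=
  ⋃₀ {U ∈ 𝒰 | (U ∩ A).Nonempty}

section Star

variable {X : Type*} {A B : Set X} {𝒰 : Set (Set X)}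

theorem subset_star' {U : Set X} (hU : U ∈ 𝒰) (hUA : (U ∩ A).Nonempty) : U ⊆ star' A 𝒰 :=
  Set.subset_sUnion_of_mem ⟨hU, hUA⟩

theorem star'_mono (hAB : A ⊆ B) : star' A 𝒰 ⊆ star' B 𝒰 :=
  Set.sUnion_mono fun _ ⟨hU, hUA⟩ => ⟨hU, hUA.mono (Set.inter_subset_inter_right _ hAB)⟩

theorem star'_iUnion {ι : Sort*} (A : ι → Set X) : star' (⋃ i, A i) 𝒰 = ⋃ i, star' (A i) 𝒰 := by
  apply Set.Subset.antisymm
  · rintro x ⟨U, ⟨hU, y, hyU, hyA⟩, hxU⟩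
    obtain ⟨i, hyAi⟩ := Set.mem_iUnion.mp hyA
    exact Set.mem_iUnion.mpr ⟨i, subset_star' hU ⟨y, hyU, hyAi⟩ hxU⟩
  · exact Set.iUnion_subset fun i => star'_mono (Set.subset_iUnion A i)

theorem closure_subset_star' [TopologicalSpace X] (h𝒰open : ∀ U ∈ 𝒰, IsOpen U)
    (h𝒰cov : ⋃₀ 𝒰 = Set.univ) : closure A ⊆ star' A 𝒰 := by
  intro x hx
  obtain ⟨U, hU, hxU⟩ := Set.mem_sUnion.mp (h𝒰cov ▸ Set.mem_univ x)
  exact subset_star' hU (mem_closure_iff.mp hx U (h𝒰open U hU) hxU) hxU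

end Star

theorem stmt_10_general {X : Type*} [TopologicalSpace X]
    (𝒱 𝒱₁ : Set (Set X))
    (h𝒱₁cov : ⋃₀ 𝒱₁ = Set.univ) (h𝒱₁open : ∀ V ∈ 𝒱₁, IsOpen V)
    (hstar : ∀ V ∈ 𝒱₁, ∃ V' ∈ 𝒱, star' V 𝒱₁ ⊆ V')
    (𝓡 : Set (Set X))
    (h𝓡ref : ∀ R ∈ 𝓡, ∃ V ∈ 𝒱₁, R ⊆ V) :
    ∀ (n : ℕ) (R : Fin n → Set X), (∀ k, R k ∈ 𝓡) →
      ∃ V : Fin n → Set X, (∀ k, V k ∈ 𝒱) ∧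
        interior (closure (⋃ k, R k)) ⊆ ⋃ k, V k := by
  intro n R hR
  choose W hW hRW using fun k => h𝓡ref (R k) (hR k)
  choose V hV hWV using fun k => hstar (W k) (hW k)
  refine ⟨V, hV, ?_⟩
  calc interior (closure (⋃ k, R k))
      ⊆ closure (⋃ k, R k) := interior_subset
    _ ⊆ star' (⋃ k, R k) 𝒱₁ := closure_subset_star' h𝒱₁open h𝒱₁cov
    _ = ⋃ k, star' (R k) 𝒱₁ := star'_iUnion R
    _ ⊆ ⋃ k, V k := Set.iUnion_mono fun k => (star'_mono (hRW k)).trans (hWV k)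

theorem stmt_10 {X : Type*} [TopologicalSpace X]
    (𝒱 𝒱₁ : Set (Set X))
    (h𝒱cov : ⋃₀ 𝒱 = Set.univ)
    (h𝒱₁cov : ⋃₀ 𝒱₁ = Set.univ) (h𝒱₁open : ∀ V ∈ 𝒱₁, IsOpen V)
    (hstar : ∀ V ∈ 𝒱₁, ∃ V' ∈ 𝒱, star' V 𝒱₁ ⊆ V')
    (𝓡 : Set (Set X)) (h𝓡open : ∀ R ∈ 𝓡, IsOpen R)
    (h𝓡ref : ∀ R ∈ 𝓡, ∃ V ∈ 𝒱₁, R ⊆ V) :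
    ∀ (n : ℕ) (R : Fin n → Set X), (∀ k, R k ∈ 𝓡) →
      ∃ V : Fin n → Set X, (∀ k, V k ∈ 𝒱) ∧
        interior (closure (⋃ k, R k)) ⊆ ⋃ k, V k :=
  stmt_10_general 𝒱 𝒱₁ h𝒱₁cov h𝒱₁open hstar 𝓡 h𝓡ref
end
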